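/- Let A be a q-positive subset of an SSD space B. If A is convex and closed in the w(B,B) topology, then A = G_{Φ_A}. Likewise, if A is maximally q-positive, then A = G_{Φ_A}. -/

import Mathlib

noncomputable section

variable {B : Type*} [AddCommGroup B] [Module ℝ B]

/-- The quadratic form `q(x) = ½⌊x,x⌋` associated to the bilinear form `br`. -/
def qQ (br : B →ₗ[ℝ] B →ₗ[ℝ] ℝ) (x : B) : ℝ := (1 / 2) * br x x

/-- `A` is `q`-positive: nonempty and `q(b - c) ≥ 0` for all `b, c ∈ A`. -/
def IsQPositive (br : B →ₗ[ℝ] B →ₗ[ℝ] ℝ) (A : Set B) : Prop :=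
  A.Nonempty ∧ ∀ b ∈ A, ∀ c ∈ A, 0 ≤ qQ br (b - c)

/-- `A^π`, the set of points `q`-positively related to `A`. -/
def qPi (br : B →ₗ[ℝ] B →ₗ[ℝ] ℝ) (A : Set B) : Set B :=
  {b : B | ∀ a ∈ A, 0 ≤ qQ br (b - a)}

/-- `A` is maximally `q`-positive. -/
def IsMaxQPositive (br : B →ₗ[ℝ] B →ₗ[ℝ] ℝ) (A : Set B) : Prop :=
  IsQPositive br A ∧ ∀ C : Set B, IsQPositive br C → A ⊆ C → C = A

/-- The generalized Fitzpatrick function `Φ_A(x) = sup_{a ∈ A} (⌊x,a⌋ - q(a))`. -/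
def PhiF (br : B →ₗ[ℝ] B →ₗ[ℝ] ℝ) (A : Set B) (x : B) : EReal :=
  ⨆ a ∈ A, ((br x a - qQ br a : ℝ) : EReal)

/-- The intrinsic conjugate `f^@(b) = sup_{c ∈ B} (⌊c,b⌋ - f(c))`. -/
def intrinsicConj (br : B →ₗ[ℝ] B →ₗ[ℝ] ℝ) (f : B → EReal) (b : B) : EReal :=
  ⨆ c : B, ((br c b : ℝ) : EReal) - f c

/-- `P_q(f) = {b : f(b) = q(b)}`. -/
def PqSet (br : B →ₗ[ℝ] B →ₗ[ℝ] ℝ) (f : B → EReal) : Set B :=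
  {b : B | f b = ((qQ br b : ℝ) : EReal)}

/-- `G_f = {b : f(b) + f^@(b) = ⌊b,b⌋}`. -/
def GSet (br : B →ₗ[ℝ] B →ₗ[ℝ] ℝ) (f : B → EReal) : Set B :=
  {b : B | f b + intrinsicConj br f b = ((br b b : ℝ) : EReal)}

/-- Convexity for `ℝ ∪ {+∞}`-valued functions. -/
def ConvexE (f : B → EReal) : Prop :=
  ∀ x y : B, ∀ α β : ℝ, 0 ≤ α → 0 ≤ β → α + β = 1 →
    f (α • x + β • y) ≤ (α : EReal) * f x + (β : EReal) * f y

/-- The weak topology `w(B,B)` induced by the functionals `⌊·,b⌋`, `b ∈ B`. -/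
def weakTop (br : B →ₗ[ℝ] B →ₗ[ℝ] ℝ) : TopologicalSpace B :=
  ⨅ b : B, TopologicalSpace.induced (fun x => br x b) inferInstance

/-- Lower semicontinuity with respect to the weak topology `w(B,B)`. -/
def LscW (br : B →ₗ[ℝ] B →ₗ[ℝ] ℝ) (f : B → EReal) : Prop :=
  @LowerSemicontinuous B EReal (weakTop br) _ f

/-- `A` is `q`-representable: it has a `w(B,B)`-lsc proper convex `q`-representation. -/
def IsQRepresentable (br : B →ₗ[ℝ] B →ₗ[ℝ] ℝ) (A : Set B) : Prop :=
  ∃ f : B → EReal, LscW br f ∧ ConvexE f ∧ (∃ x, f x ≠ ⊤) ∧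
    (∀ x, ((qQ br x : ℝ) : EReal) ≤ f x) ∧ PqSet br f = A

/-!
For `a ∈ A`, `q`-positivity gives `Φ_A(a) = Φ_A^@(a) = q(a)`, so `A ⊆ G_{Φ_A}`. At a point
`b ∈ G_{Φ_A}` both values are finite with sum `2q(b)`; since `Φ_A ≤ Φ_A^@`, this forces
`Φ_A(b) ≤ q(b)`, i.e. `b ∈ A^π`, and `A^π ⊆ A` when `A` is maximal. When `A` is convex and
`w(B,B)`-closed, a point `b ∉ A` is strictly separated from `A` by a functional `⌊·,d⌋` (these are
all the `w(B,B)`-continuous ones); then `Φ_A(b + d) ≤ Φ_A(b) + u` with `u < ⌊b,d⌋`, and the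
inequality `⌊b + d, b⌋ - Φ_A(b + d) ≤ Φ_A^@(b)` contradicts `Φ_A(b) + Φ_A^@(b) = ⌊b,b⌋`.
-/

lemma EReal.exists_coe_of_add_eq_coe {x y : EReal} {c : ℝ} (hx : x ≠ ⊥) (hy : y ≠ ⊥)
    (h : x + y = c) : ∃ r s : ℝ, x = r ∧ y = s ∧ r + s = c := by
  induction x <;> induction y <;> simp_all [← EReal.coe_add]

section

variable (br : B →ₗ[ℝ] B →ₗ[ℝ] ℝ)

lemma weakTop_eq_weakBilin : weakTop br = WeakBilin.instTopologicalSpace br := by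
  simp only [weakTop, WeakBilin.instTopologicalSpace, Pi.topologicalSpace, induced_iInf,
    induced_compose]
  rfl

lemma exists_separating_of_isClosed_weakTop {A : Set B} (hconv : Convex ℝ A)
    (hclosed : @IsClosed B (weakTop br) A) {b : B} (hb : b ∉ A) :
    ∃ d : B, ∃ u : ℝ, (∀ a ∈ A, br a d < u) ∧ u < br b d := by
  rw [weakTop_eq_weakBilin] at hclosed
  obtain ⟨f, u, hfA, hfb⟩ := geometric_hahn_banach_closed_point (E := WeakBilin br) hconv hclosed hb
  obtain ⟨d, rfl⟩ := LinearMap.dualEmbedding_surjective br f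
  exact ⟨d, u, hfA, hfb⟩

variable {br}

lemma qQ_neg (x : B) : qQ br (-x) = qQ br x := by
  simp [qQ]

lemma qQ_sub (hsym : ∀ x y : B, br x y = br y x) (x y : B) :
    qQ br (x - y) = qQ br x + qQ br y - br x y := by
  simp only [qQ, map_sub, LinearMap.sub_apply, hsym y x]
  ring

lemma apply_self_eq_two_mul_qQ (x : B) : br x x = 2 * qQ br x := by
  simp only [qQ]
  ring

lemma IsQPositive.insert {A : Set B} (hA : IsQPositive br A) {b : B} (hb : b ∈ qPi br A) :
    IsQPositive br (insert b A) := by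
  refine ⟨Set.insert_nonempty b A, ?_⟩
  rintro x (rfl | hx) y (rfl | hy)
  · simp [qQ]
  · exact hb y hy
  · rw [← neg_sub, qQ_neg]
    exact hb x hx
  · exact hA.2 x hx y hy

lemma IsMaxQPositive.qPi_subset {A : Set B} (hA : IsMaxQPositive br A) : qPi br A ⊆ A :=
  fun b hb => hA.2 _ (hA.1.insert hb) (Set.subset_insert b A) ▸ Set.mem_insert b A

lemma coe_sub_le_PhiF {A : Set B} {a : B} (ha : a ∈ A) (x : B) :
    ((br x a - qQ br a : ℝ) : EReal) ≤ PhiF br A x :=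
  le_iSup₂_of_le a ha le_rfl

lemma PhiF_le_coe_iff {A : Set B} {x : B} {r : ℝ} :
    PhiF br A x ≤ r ↔ ∀ a ∈ A, br x a - qQ br a ≤ r := by
  simp only [PhiF, iSup₂_le_iff, EReal.coe_le_coe_iff]

lemma PhiF_ne_bot {A : Set B} (hA : A.Nonempty) (x : B) : PhiF br A x ≠ ⊥ :=
  let ⟨_, ha⟩ := hA
  ne_bot_of_le_ne_bot (EReal.coe_ne_bot _) (coe_sub_le_PhiF ha x)

lemma coe_sub_le_intrinsicConj (f : B → EReal) (c b : B) :
    ((br c b : ℝ) : EReal) - f c ≤ intrinsicConj br f b :=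
  le_iSup (fun c => ((br c b : ℝ) : EReal) - f c) c

lemma PhiF_eq_of_mem (hsym : ∀ x y : B, br x y = br y x) {A : Set B} (hA : IsQPositive br A)
    {a : B} (ha : a ∈ A) : PhiF br A a = qQ br a := by
  refine le_antisymm (PhiF_le_coe_iff.2 fun c hc => ?_) ?_
  · have := hA.2 a ha c hc
    rw [qQ_sub hsym] at this
    linarith
  · convert coe_sub_le_PhiF ha a using 2
    rw [apply_self_eq_two_mul_qQ]
    ring

lemma intrinsicConj_PhiF_eq_of_mem (hsym : ∀ x y : B, br x y = br y x) {A : Set B}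
    (hA : IsQPositive br A) {a : B} (ha : a ∈ A) :
    intrinsicConj br (PhiF br A) a = qQ br a := by
  refine le_antisymm (iSup_le fun c => ?_) ?_
  · calc ((br c a : ℝ) : EReal) - PhiF br A c
        ≤ ((br c a : ℝ) : EReal) - ((br c a - qQ br a : ℝ) : EReal) :=
          EReal.sub_le_sub le_rfl (coe_sub_le_PhiF ha c)
      _ = qQ br a := by rw [← EReal.coe_sub, sub_sub_cancel]
  · convert coe_sub_le_intrinsicConj (PhiF br A) a a using 1
    rw [PhiF_eq_of_mem hsym hA ha, ← EReal.coe_sub, apply_self_eq_two_mul_qQ]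
    norm_num [two_mul]

lemma subset_GSet_PhiF (hsym : ∀ x y : B, br x y = br y x) {A : Set B} (hA : IsQPositive br A) :
    A ⊆ GSet br (PhiF br A) := fun a ha => by
  change PhiF br A a + _ = _
  rw [PhiF_eq_of_mem hsym hA ha, intrinsicConj_PhiF_eq_of_mem hsym hA ha,
    ← EReal.coe_add, apply_self_eq_two_mul_qQ, two_mul]

lemma PhiF_le_intrinsicConj_PhiF (hsym : ∀ x y : B, br x y = br y x) {A : Set B}
    (hA : IsQPositive br A) (b : B) : PhiF br A b ≤ intrinsicConj br (PhiF br A) b :=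
  iSup₂_le fun a ha => by
    simpa [PhiF_eq_of_mem hsym hA ha, hsym a b] using
      coe_sub_le_intrinsicConj (br := br) (PhiF br A) a b

lemma exists_coe_of_mem_GSet_PhiF (hsym : ∀ x y : B, br x y = br y x) {A : Set B}
    (hA : IsQPositive br A) {b : B} (hb : b ∈ GSet br (PhiF br A)) :
    ∃ r s : ℝ, PhiF br A b = r ∧ intrinsicConj br (PhiF br A) b = s ∧ r + s = br b b :=
  have hr := PhiF_ne_bot hA.1 b
  EReal.exists_coe_of_add_eq_coe hr
    (ne_bot_of_le_ne_bot hr (PhiF_le_intrinsicConj_PhiF hsym hA b)) hb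

lemma GSet_PhiF_subset_qPi (hsym : ∀ x y : B, br x y = br y x) {A : Set B}
    (hA : IsQPositive br A) : GSet br (PhiF br A) ⊆ qPi br A := fun b hb a ha => by
  obtain ⟨r, s, hr, hs, hrs⟩ := exists_coe_of_mem_GSet_PhiF hsym hA hb
  have hrs_le : r ≤ s := by
    have := PhiF_le_intrinsicConj_PhiF hsym hA b
    rwa [hr, hs, EReal.coe_le_coe_iff] at this
  have hba : br b a - qQ br a ≤ r := PhiF_le_coe_iff.1 hr.le a ha
  rw [qQ_sub hsym]
  linarith [apply_self_eq_two_mul_qQ (br := br) b]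

lemma GSet_PhiF_subset_of_convex_of_isClosed (hsym : ∀ x y : B, br x y = br y x) {A : Set B}
    (hA : IsQPositive br A) (hconv : Convex ℝ A) (hclosed : @IsClosed B (weakTop br) A) :
    GSet br (PhiF br A) ⊆ A := by
  intro b hb
  by_contra hbA
  obtain ⟨r, s, hr, hs, hrs⟩ := exists_coe_of_mem_GSet_PhiF hsym hA hb
  obtain ⟨d, u, hdA, hdb⟩ := exists_separating_of_isClosed_weakTop br hconv hclosed hbA
  have hshift : PhiF br A (b + d) ≤ ((r + u : ℝ) : EReal) := PhiF_le_coe_iff.2 fun a ha => by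
    have hba := PhiF_le_coe_iff.1 hr.le a ha
    have hda := hdA a ha
    simp only [map_add, LinearMap.add_apply, hsym d a]
    linarith
  have hconj : ((br (b + d) b - (r + u) : ℝ) : EReal) ≤ s := by
    rw [EReal.coe_sub, ← hs]
    exact (EReal.sub_le_sub le_rfl hshift).trans (coe_sub_le_intrinsicConj _ _ _)
  have hreal : br (b + d) b - (r + u) ≤ s := EReal.coe_le_coe_iff.1 hconj
  simp only [map_add, LinearMap.add_apply, hsym d b] at hreal
  linarith

end

theorem stmt8_general (br : B →ₗ[ℝ] B →ₗ[ℝ] ℝ)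
    (hsym : ∀ x y : B, br x y = br y x)
    (A : Set B) (hA : IsQPositive br A) :
    (Convex ℝ A → @IsClosed B (weakTop br) A → A = GSet br (PhiF br A)) ∧
    (IsMaxQPositive br A → A = GSet br (PhiF br A)) :=
  ⟨fun hconv hclosed => (subset_GSet_PhiF hsym hA).antisymm
      (GSet_PhiF_subset_of_convex_of_isClosed hsym hA hconv hclosed),
    fun hmax => (subset_GSet_PhiF hsym hA).antisymm
      ((GSet_PhiF_subset_qPi hsym hA).trans hmax.qPi_subset)⟩

/-- If A is convex and w(B,B)-closed then A = G_{Φ_A};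
likewise if A is maximally q-positive then A = G_{Φ_A}. -/
theorem stmt8 [Nontrivial B] (br : B →ₗ[ℝ] B →ₗ[ℝ] ℝ)
    (hsym : ∀ x y : B, br x y = br y x)
    (A : Set B) (hA : IsQPositive br A) :
    (Convex ℝ A → @IsClosed B (weakTop br) A → A = GSet br (PhiF br A)) ∧
    (IsMaxQPositive br A → A = GSet br (PhiF br A)) :=
  stmt8_general br hsym A hA
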